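/- For each t ∈ {0,1,…,T} and each k ∈ ℕ, the single-system value function Ṽ_t(x,k) is non-decreasing in the deterioration level x: if x ≤ x' then Ṽ_t(x,k) ≤ Ṽ_t(x',k). -/

import Mathlib

/-!
Backward induction on `t`: each `Ṽ_t` is bounded and non-decreasing in `x`. Boundedness makes
the expectations absolutely convergent, hence monotone in the integrand, since the negative
binomial weights are non-negative and sum to one (binomial series
`∑ₙ (r+n-1 choose n) (1-p)ⁿ = p^(-r)`). For `x < ξ ≤ x'` the `min` at `x` is at most the
preventive branch `cp + E[Ṽ_{t+1}(Z, ·)]`, which is below the failure branch at `x'` as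
`cp ≤ cu`; for `x ≤ x' < ξ` both branches are monotone by the induction hypothesis.
-/

open Filter

/-- Negative Binomial pmf with real shape `r` and success probability `p`:
`NB(r,p)(z) = Γ(z+r)/(Γ(r)·z!)·p^r·(1−p)^z` for `r > 0`, and `NB(0,p)` is
the point mass at `0`. -/
noncomputable def NB (r p : ℝ) (z : ℕ) : ℝ :=
  if r = 0 then (if z = 0 then (1 : ℝ) else 0)
  else Real.Gamma ((z : ℝ) + r) / (Real.Gamma r * (Nat.factorial z : ℝ)) * p ^ r * (1 - p) ^ z

/-- `p_t = (β0 + N·t)/(β0 + N·t + 1)`. -/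
noncomputable def pt (β0 : ℝ) (N t : ℕ) : ℝ :=
  (β0 + (N : ℝ) * (t : ℝ)) / (β0 + (N : ℝ) * (t : ℝ) + 1)

/-- Expectation `E_{(Z,K)}[f(Z,K)]` with `Z ~ NB(α0+k, p_t)` and
`K ~ NB((N−1)(α0+k), p_t)` independent. -/
noncomputable def EZK (α0 β0 : ℝ) (N t k : ℕ) (f : ℕ → ℕ → ℝ) : ℝ :=
  ∑' z : ℕ, ∑' κ : ℕ,
    NB (α0 + (k : ℝ)) (pt β0 N t) z * NB (((N : ℝ) - 1) * (α0 + (k : ℝ))) (pt β0 N t) κ * f z κ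

theorem Real.Gamma_add_nat_eq_mul_ascPochhammer {r : ℝ} (hr : 0 < r) (n : ℕ) :
    Real.Gamma (n + r) = Real.Gamma r * (ascPochhammer ℝ n).eval r := by
  induction n with
  | zero => simp
  | succ n ih =>
    rw [Nat.cast_succ, add_right_comm, Real.Gamma_add_one (by positivity), ih,
      ascPochhammer_succ_eval]
    ring

theorem Real.Gamma_add_nat_div_eq_choose {r : ℝ} (hr : 0 < r) (n : ℕ) :
    Real.Gamma (n + r) / (Real.Gamma r * n.factorial) = Ring.choose (r + n - 1) n := by
  rw [← Ring.multichoose_eq, Real.Gamma_add_nat_eq_mul_ascPochhammer hr,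
    ← Polynomial.ascPochhammer_smeval_eq_eval,
    ← Ring.factorial_nsmul_multichoose_eq_ascPochhammer, nsmul_eq_mul]
  have := (Real.Gamma_pos_of_pos hr).ne'
  field_simp

theorem Real.hasSum_choose_mul_pow {r x : ℝ} (hx : |x| < 1) :
    HasSum (fun n : ℕ => Ring.choose (r + n - 1) n * x ^ n) (1 / (1 - x) ^ r) := by
  have h := (Real.one_div_one_sub_rpow_hasFPowerSeriesOnBall_zero r).hasSum (y := x)
    (by simpa [Metric.mem_eball, edist_dist, Real.dist_eq] using hx)
  simpa [FormalMultilinearSeries.ofScalars_apply_eq, mul_comm] using h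

theorem NB_nonneg {r p : ℝ} (hr : 0 ≤ r) (hp0 : 0 < p) (hp1 : p < 1) (z : ℕ) :
    0 ≤ NB r p z := by
  rw [NB]
  split_ifs with h
  · positivity
  · positivity
  · have : 0 < 1 - p := by linarith
    have := Real.Gamma_pos_of_pos (lt_of_le_of_ne hr (Ne.symm h))
    have := Real.Gamma_pos_of_pos (by positivity : (0 : ℝ) < z + r)
    positivity

theorem hasSum_NB {r p : ℝ} (hr : 0 ≤ r) (hp0 : 0 < p) (hp1 : p < 1) :
    HasSum (NB r p) 1 := by
  rcases hr.eq_or_lt with rfl | hr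
  · convert hasSum_ite_eq 0 (1 : ℝ) using 1
    ext z
    simp [NB]
  have h := (Real.hasSum_choose_mul_pow (r := r) (x := 1 - p)
    (by rw [abs_lt]; constructor <;> linarith)).mul_left (p ^ r)
  rw [sub_sub_cancel, mul_one_div, div_self (Real.rpow_pos_of_pos hp0 r).ne'] at h
  refine h.congr_fun fun z => ?_
  rw [NB.eq_1, if_neg hr.ne', Real.Gamma_add_nat_div_eq_choose hr]
  ring

theorem pt_mem_Ioo {β0 : ℝ} (hβ0 : 0 < β0) (N t : ℕ) : pt β0 N t ∈ Set.Ioo 0 1 := by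
  have h : 0 < β0 + (N : ℝ) * t := by positivity
  exact ⟨div_pos h (by linarith), (div_lt_one (by linarith)).2 (by linarith)⟩

section WeightedSum

variable {ι : Type*} {w g h : ι → ℝ} {M : ℝ}

theorem summable_mul_of_abs_le (hw : ∀ i, 0 ≤ w i) (hws : Summable w)
    (hg : ∀ i, |g i| ≤ M) : Summable fun i => w i * g i :=
  (hws.mul_right M).of_norm_bounded fun i => by
    rw [norm_mul, Real.norm_of_nonneg (hw i), Real.norm_eq_abs]
    exact mul_le_mul_of_nonneg_left (hg i) (hw i)

theorem tsum_mul_le_tsum_mul (hw : ∀ i, 0 ≤ w i) (hws : Summable w) (hgh : ∀ i, g i ≤ h i)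
    (hg : ∀ i, |g i| ≤ M) (hh : ∀ i, |h i| ≤ M) :
    ∑' i, w i * g i ≤ ∑' i, w i * h i :=
  Summable.tsum_le_tsum (fun i => mul_le_mul_of_nonneg_left (hgh i) (hw i))
    (summable_mul_of_abs_le hw hws hg) (summable_mul_of_abs_le hw hws hh)

theorem abs_tsum_mul_le (hw : ∀ i, 0 ≤ w i) (hw1 : HasSum w 1) (hg : ∀ i, |g i| ≤ M) :
    |∑' i, w i * g i| ≤ M := by
  have hM : ∀ i, |M| ≤ M := fun i => (abs_of_nonneg ((abs_nonneg _).trans (hg i))).le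
  have hconst : ∀ c : ℝ, ∑' i, w i * c = c := fun c => by
    rw [tsum_mul_right, hw1.tsum_eq, one_mul]
  refine abs_le.2 ⟨?_, ?_⟩
  · have h := tsum_mul_le_tsum_mul (g := fun _ => -M) hw hw1.summable
      (fun i => (abs_le.1 (hg i)).1) (by simpa using hM) hg
    rwa [hconst] at h
  · have h := tsum_mul_le_tsum_mul (h := fun _ => M) hw hw1.summable
      (fun i => (abs_le.1 (hg i)).2) hg hM
    rwa [hconst] at h

end WeightedSum

section Expectation

variable {α0 β0 : ℝ} {N t k : ℕ} {f g : ℕ → ℕ → ℝ} {M : ℝ}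

theorem EZK_eq_tsum_mul_tsum :
    EZK α0 β0 N t k f = ∑' z, NB (α0 + k) (pt β0 N t) z *
      ∑' κ, NB (((N : ℝ) - 1) * (α0 + k)) (pt β0 N t) κ * f z κ := by
  simp only [EZK, mul_assoc, tsum_mul_left]

theorem abs_EZK_le (hα0 : 0 ≤ α0) (hβ0 : 0 < β0) (hN : 1 ≤ N)
    (hf : ∀ z κ, |f z κ| ≤ M) :
    |EZK α0 β0 N t k f| ≤ M := by
  obtain ⟨hp0, hp1⟩ := pt_mem_Ioo hβ0 N t
  have hr₁ : 0 ≤ α0 + k := by positivity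
  have hr₂ : 0 ≤ ((N : ℝ) - 1) * (α0 + k) :=
    mul_nonneg (sub_nonneg.2 (by exact_mod_cast hN)) hr₁
  rw [EZK_eq_tsum_mul_tsum]
  exact abs_tsum_mul_le (NB_nonneg hr₁ hp0 hp1) (hasSum_NB hr₁ hp0 hp1) fun z =>
    abs_tsum_mul_le (NB_nonneg hr₂ hp0 hp1) (hasSum_NB hr₂ hp0 hp1) (hf z)

theorem EZK_mono (hα0 : 0 ≤ α0) (hβ0 : 0 < β0) (hN : 1 ≤ N)
    (hfg : ∀ z κ, f z κ ≤ g z κ) (hf : ∀ z κ, |f z κ| ≤ M)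
    (hg : ∀ z κ, |g z κ| ≤ M) :
    EZK α0 β0 N t k f ≤ EZK α0 β0 N t k g := by
  obtain ⟨hp0, hp1⟩ := pt_mem_Ioo hβ0 N t
  have hr₁ : 0 ≤ α0 + k := by positivity
  have hr₂ : 0 ≤ ((N : ℝ) - 1) * (α0 + k) :=
    mul_nonneg (sub_nonneg.2 (by exact_mod_cast hN)) hr₁
  rw [EZK_eq_tsum_mul_tsum, EZK_eq_tsum_mul_tsum]
  have hv := NB_nonneg hr₂ hp0 hp1
  have hv1 := hasSum_NB hr₂ hp0 hp1
  exact tsum_mul_le_tsum_mul (NB_nonneg hr₁ hp0 hp1) (hasSum_NB hr₁ hp0 hp1).summable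
    (fun z => tsum_mul_le_tsum_mul hv hv1.summable (hfg z) (hf z) (hg z))
    (fun z => abs_tsum_mul_le hv hv1 (hf z)) (fun z => abs_tsum_mul_le hv hv1 (hg z))

end Expectation

section Bellman

variable {α0 β0 cp cu B : ℝ} {N ξ t : ℕ} {U W : ℕ → ℕ → ℝ}

theorem abs_le_of_bellman (hα0 : 0 ≤ α0) (hβ0 : 0 < β0) (hN : 1 ≤ N)
    (hW : ∀ x k, |W x k| ≤ B)
    (hfail : ∀ x k, ξ ≤ x → U x k = cu + EZK α0 β0 N t k (fun z κ => W z (k + z + κ)))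
    (hop : ∀ x k, x < ξ → U x k =
      min (cp + EZK α0 β0 N t k (fun z κ => W z (k + z + κ)))
        (EZK α0 β0 N t k (fun z κ => W (x + z) (k + z + κ))))
    (x k : ℕ) : |U x k| ≤ |cp| + |cu| + B := by
  have hrepl := abs_le.1 (abs_EZK_le (t := t) (k := k) hα0 hβ0 hN
    fun z κ => hW z (k + z + κ))
  have hcont := abs_le.1 (abs_EZK_le (t := t) (k := k) hα0 hβ0 hN
    fun z κ => hW (x + z) (k + z + κ))
  have := neg_abs_le cp
  have := le_abs_self cp
  have := neg_abs_le cu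
  have := le_abs_self cu
  rw [abs_le]
  rcases le_or_gt ξ x with hx | hx
  · rw [hfail x k hx]; constructor <;> linarith
  · rw [hop x k hx]
    exact ⟨le_min (by linarith) (by linarith), (min_le_left _ _).trans (by linarith)⟩

theorem monotone_of_bellman (hα0 : 0 ≤ α0) (hβ0 : 0 < β0) (hN : 1 ≤ N) (hcpcu : cp ≤ cu)
    (hW : ∀ x k, |W x k| ≤ B) (hWmono : ∀ k x x', x ≤ x' → W x k ≤ W x' k)
    (hfail : ∀ x k, ξ ≤ x → U x k = cu + EZK α0 β0 N t k (fun z κ => W z (k + z + κ)))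
    (hop : ∀ x k, x < ξ → U x k =
      min (cp + EZK α0 β0 N t k (fun z κ => W z (k + z + κ)))
        (EZK α0 β0 N t k (fun z κ => W (x + z) (k + z + κ))))
    (k x x' : ℕ) (hxx' : x ≤ x') : U x k ≤ U x' k := by
  rcases le_or_gt ξ x with hx | hx
  · rw [hfail x k hx, hfail x' k (hx.trans hxx')]
  rw [hop x k hx]
  rcases le_or_gt ξ x' with hx' | hx'
  · rw [hfail x' k hx']
    exact (min_le_left _ _).trans (by linarith)
  · rw [hop x' k hx']
    refine min_le_min le_rfl (EZK_mono hα0 hβ0 hN (fun z κ => hWmono _ _ _ ?_)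
      (fun z κ => hW _ _) (fun z κ => hW _ _))
    omega

end Bellman

theorem value_monotone_x_general
    (α0 β0 : ℝ) (hα0 : 0 < α0) (hβ0 : 0 < β0)
    (N T : ℕ) (hN : 1 ≤ N)
    (ξ : ℕ)
    (cp cu : ℝ) (hcp : 0 < cp) (hcpcu : cp < cu)
    (V : ℕ → ℕ → ℕ → ℝ)
    (hVT : ∀ x k, V T x k = if ξ ≤ x then cu else 0)
    (hVfail : ∀ t, t < T → ∀ x k, ξ ≤ x →
      V t x k = cu + EZK α0 β0 N t k (fun z κ => V (t + 1) z (k + z + κ)))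
    (hVop : ∀ t, t < T → ∀ x k, x < ξ →
      V t x k =
        min (cp + EZK α0 β0 N t k (fun z κ => V (t + 1) z (k + z + κ)))
          (EZK α0 β0 N t k (fun z κ => V (t + 1) (x + z) (k + z + κ)))) :
    ∀ t ≤ T, ∀ (k : ℕ) (x x' : ℕ), x ≤ x' → V t x k ≤ V t x' k := by
  suffices h : ∀ t ≤ T, (∃ B, ∀ x k, |V t x k| ≤ B) ∧
      ∀ k x x', x ≤ x' → V t x k ≤ V t x' k from fun t ht => (h t ht).2
  intro t ht
  induction ht using Nat.decreasingInduction with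
  | self =>
    refine ⟨⟨|cu|, fun x k => ?_⟩, fun k x x' hxx' => ?_⟩
    · rw [hVT]; split_ifs <;> simp
    · rw [hVT, hVT]; split_ifs <;> first | omega | linarith
  | of_succ t htT ih =>
    obtain ⟨⟨B, hB⟩, hmono⟩ := ih
    exact ⟨⟨_, abs_le_of_bellman hα0.le hβ0 hN hB (hVfail t htT) (hVop t htT)⟩,
      monotone_of_bellman hα0.le hβ0 hN hcpcu.le hB hmono (hVfail t htT) (hVop t htT)⟩

/-- The single-system value function is non-decreasing in the deterioration level `x`. -/
theorem value_monotone_x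
    (α0 β0 : ℝ) (hα0 : 0 < α0) (hβ0 : 0 < β0)
    (N T : ℕ) (hN : 1 ≤ N) (hT : 1 ≤ T)
    (ξ : ℕ) (hξ : 1 ≤ ξ)
    (cp cu : ℝ) (hcp : 0 < cp) (hcpcu : cp < cu)
    (V : ℕ → ℕ → ℕ → ℝ)
    (hVT : ∀ x k, V T x k = if ξ ≤ x then cu else 0)
    (hVfail : ∀ t, t < T → ∀ x k, ξ ≤ x →
      V t x k = cu + EZK α0 β0 N t k (fun z κ => V (t + 1) z (k + z + κ)))
    (hVop : ∀ t, t < T → ∀ x k, x < ξ →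
      V t x k =
        min (cp + EZK α0 β0 N t k (fun z κ => V (t + 1) z (k + z + κ)))
          (EZK α0 β0 N t k (fun z κ => V (t + 1) (x + z) (k + z + κ)))) :
    ∀ t ≤ T, ∀ (k : ℕ) (x x' : ℕ), x ≤ x' → V t x k ≤ V t x' k :=
  value_monotone_x_general α0 β0 hα0 hβ0 N T hN ξ cp cu hcp hcpcu V hVT hVfail hVop
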